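/- arXiv:1402.1941 — 4 statements merged into one kernel-verified Lean document; each statement's English description precedes it below -/
import Mathlib

section
/- Define the vector fields on function space (parametrized by smooth functions of t): X(f) acting with components (f, f') and Y(g) with components involving g and -g'/(2σ). Then the commutator [Y(g₁), Y(g₂)] of the corresponding first-order differential operators Y(g) = g∂_y - (g'/(2σ))y∂_x - (d/dt)(g'/(2σ))y∂_u equals X(h) = h∂_x + h'∂_u with h = (g₁'g₂ - g₁g₂')/(2σ), and [X(f₁), X(f₂)] = 0, [X(f), Y(g)] = 0. -/
/-- Partial derivative in the first variable `x` of a function of `(x, y, t, u)`. -/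
noncomputable def Dx (F : ℝ → ℝ → ℝ → ℝ → ℝ) : ℝ → ℝ → ℝ → ℝ → ℝ :=
  fun x y t u => deriv (fun x' => F x' y t u) x

/-- Partial derivative in the second variable `y`. -/
noncomputable def Dy (F : ℝ → ℝ → ℝ → ℝ → ℝ) : ℝ → ℝ → ℝ → ℝ → ℝ :=
  fun x y t u => deriv (fun y' => F x y' t u) y

/-- Partial derivative in the fourth variable `u`. -/
noncomputable def Du (F : ℝ → ℝ → ℝ → ℝ → ℝ) : ℝ → ℝ → ℝ → ℝ → ℝ :=
  fun x y t u => deriv (fun u' => F x y t u') u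

/-- The operator `X(f) = f(t) ∂_x + f'(t) ∂_u`. -/
noncomputable def Xop (f : ℝ → ℝ) (F : ℝ → ℝ → ℝ → ℝ → ℝ) : ℝ → ℝ → ℝ → ℝ → ℝ :=
  fun x y t u => f t * Dx F x y t u + deriv f t * Du F x y t u

/-- The operator `Y(g) = g(t) ∂_y - (g'/(2σ)) y ∂_x - (d/dt)(g'/(2σ)) y ∂_u`. -/
noncomputable def Yop (σ g : ℝ → ℝ) (F : ℝ → ℝ → ℝ → ℝ → ℝ) : ℝ → ℝ → ℝ → ℝ → ℝ :=
  fun x y t u => g t * Dy F x y t u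
    - (deriv g t / (2 * σ t)) * y * Dx F x y t u
    - deriv (fun s => deriv g s / (2 * σ s)) t * y * Du F x y t u

namespace SymmAlgAux

abbrev E4 : Type := ℝ × ℝ × ℝ × ℝ

noncomputable def dd (Φ : E4 → ℝ) (v : E4) : E4 → ℝ := fun p => fderiv ℝ Φ p v

def ex : E4 := (1,0,0,0)
def ey : E4 := (0,1,0,0)
def eu : E4 := (0,0,0,1)

lemma contDiff_dd {Φ : E4 → ℝ} (hΦ : ContDiff ℝ (⊤ : ℕ∞) Φ) (v : E4) : ContDiff ℝ (⊤ : ℕ∞) (dd Φ v) :=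
  (hΦ.fderiv_right (by simp)).clm_apply contDiff_const

lemma dd_comm {Φ : E4 → ℝ} (hΦ : ContDiff ℝ (⊤ : ℕ∞) Φ) (v w : E4) (p : E4) :
    dd (dd Φ v) w p = dd (dd Φ w) v p := by
  have h1 : ∀ q, HasFDerivAt Φ (fderiv ℝ Φ q) q := fun q =>
    (hΦ.differentiable (by simp) q).hasFDerivAt
  have h2 : HasFDerivAt (fderiv ℝ Φ) (fderiv ℝ (fderiv ℝ Φ) p) p :=
    (((hΦ.fderiv_right (m := (⊤ : ℕ∞)) (by simp)).differentiable (by simp)) p).hasFDerivAt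
  have key : ∀ a b : E4, dd (dd Φ a) b p = fderiv ℝ (fderiv ℝ Φ) p b a := by
    intro a b
    have hc := ((ContinuousLinearMap.apply ℝ ℝ a).hasFDerivAt.comp p h2).fderiv
    show fderiv ℝ ((ContinuousLinearMap.apply ℝ ℝ a) ∘ fderiv ℝ Φ) p b = _
    rw [hc]; rfl
  rw [key v w, key w v]
  exact second_derivative_symmetric h1 h2 w v

lemma hasDerivAt_sx {Φ : E4 → ℝ} (hΦ : Differentiable ℝ Φ) (x y t u : ℝ) :
    HasDerivAt (fun x' => Φ (x', y, t, u)) (dd Φ ex (x,y,t,u)) x := by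
  have hline : HasDerivAt (fun x' : ℝ => ((x', y, t, u) : E4)) ex x :=
    HasDerivAt.prodMk (hasDerivAt_id x) (hasDerivAt_const x (y,t,u))
  exact (hΦ (x,y,t,u)).hasFDerivAt.comp_hasDerivAt x hline

lemma hasDerivAt_sy {Φ : E4 → ℝ} (hΦ : Differentiable ℝ Φ) (x y t u : ℝ) :
    HasDerivAt (fun y' => Φ (x, y', t, u)) (dd Φ ey (x,y,t,u)) y := by
  have hline : HasDerivAt (fun y' : ℝ => ((x, y', t, u) : E4)) ey y :=
    HasDerivAt.prodMk (hasDerivAt_const y x) (HasDerivAt.prodMk (hasDerivAt_id y) (hasDerivAt_const y (t,u)))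
  exact (hΦ (x,y,t,u)).hasFDerivAt.comp_hasDerivAt y hline

lemma hasDerivAt_su {Φ : E4 → ℝ} (hΦ : Differentiable ℝ Φ) (x y t u : ℝ) :
    HasDerivAt (fun u' => Φ (x, y, t, u')) (dd Φ eu (x,y,t,u)) u := by
  have hline : HasDerivAt (fun u' : ℝ => ((x, y, t, u') : E4)) eu u :=
    HasDerivAt.prodMk (hasDerivAt_const u x) (HasDerivAt.prodMk (hasDerivAt_const u y)
      (HasDerivAt.prodMk (hasDerivAt_const u t) (hasDerivAt_id u)))
  exact (hΦ (x,y,t,u)).hasFDerivAt.comp_hasDerivAt u hline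

/-- deriv in x of a 3-term combination with coefficients not depending on x. -/
lemma derivX_comb3 {A B C : E4 → ℝ} (hA : Differentiable ℝ A) (hB : Differentiable ℝ B)
    (hC : Differentiable ℝ C) (a b c x y t u : ℝ) :
    deriv (fun x' => a * A (x',y,t,u) + b * B (x',y,t,u) + c * C (x',y,t,u)) x
      = a * dd A ex (x,y,t,u) + b * dd B ex (x,y,t,u) + c * dd C ex (x,y,t,u) :=
  ((((hasDerivAt_sx hA x y t u).const_mul a).add
    ((hasDerivAt_sx hB x y t u).const_mul b)).add
    ((hasDerivAt_sx hC x y t u).const_mul c)).deriv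

lemma derivU_comb3 {A B C : E4 → ℝ} (hA : Differentiable ℝ A) (hB : Differentiable ℝ B)
    (hC : Differentiable ℝ C) (a b c x y t u : ℝ) :
    deriv (fun u' => a * A (x,y,t,u') + b * B (x,y,t,u') + c * C (x,y,t,u')) u
      = a * dd A eu (x,y,t,u) + b * dd B eu (x,y,t,u) + c * dd C eu (x,y,t,u) :=
  ((((hasDerivAt_su hA x y t u).const_mul a).add
    ((hasDerivAt_su hB x y t u).const_mul b)).add
    ((hasDerivAt_su hC x y t u).const_mul c)).deriv

lemma derivY_comb3 {A B C : E4 → ℝ} (hA : Differentiable ℝ A) (hB : Differentiable ℝ B)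
    (hC : Differentiable ℝ C) (a b c x y t u : ℝ) :
    deriv (fun y' => a * A (x,y',t,u) + b * B (x,y',t,u) + c * C (x,y',t,u)) y
      = a * dd A ey (x,y,t,u) + b * dd B ey (x,y,t,u) + c * dd C ey (x,y,t,u) :=
  ((((hasDerivAt_sy hA x y t u).const_mul a).add
    ((hasDerivAt_sy hB x y t u).const_mul b)).add
    ((hasDerivAt_sy hC x y t u).const_mul c)).deriv

/-- deriv in y of a Y-type combination where two coefficients carry a factor `y'`. -/
lemma derivY_Ytype {A B C : E4 → ℝ} (hA : Differentiable ℝ A) (hB : Differentiable ℝ B)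
    (hC : Differentiable ℝ C) (a b c x y t u : ℝ) :
    deriv (fun y' => a * A (x,y',t,u) + (b * y') * B (x,y',t,u) + (c * y') * C (x,y',t,u)) y
      = a * dd A ey (x,y,t,u)
        + (b * B (x,y,t,u) + (b * y) * dd B ey (x,y,t,u))
        + (c * C (x,y,t,u) + (c * y) * dd C ey (x,y,t,u)) := by
  have := ((((hasDerivAt_sy hA x y t u).const_mul a).add
    (((hasDerivAt_id y).const_mul b).mul (hasDerivAt_sy hB x y t u))).add
    (((hasDerivAt_id y).const_mul c).mul (hasDerivAt_sy hC x y t u))).deriv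
  simp at this; exact this

lemma deriv_contDiff {g : ℝ → ℝ} (hg : ContDiff ℝ (⊤ : ℕ∞) g) : ContDiff ℝ (⊤ : ℕ∞) (deriv g) :=
  ((contDiff_succ_iff_deriv (n := (⊤ : ℕ∞))).1 (hg.of_le (by simp))).2.2

end SymmAlgAux

open SymmAlgAux

/-- Commutation relations of the symmetry generators: `[X(f₁), X(f₂)] = 0`,
`[X(f), Y(g)] = 0` and `[Y(g₁), Y(g₂)] = X((g₁' g₂ - g₁ g₂')/(2σ))`. -/
theorem symmetry_algebra_commutation_relations (σ f f₁ f₂ g g₁ g₂ : ℝ → ℝ)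
    (hσ : ContDiff ℝ (⊤ : ℕ∞) σ) (hσ0 : ∀ t, σ t ≠ 0)
    (hf : ContDiff ℝ (⊤ : ℕ∞) f) (hf₁ : ContDiff ℝ (⊤ : ℕ∞) f₁) (hf₂ : ContDiff ℝ (⊤ : ℕ∞) f₂)
    (hg : ContDiff ℝ (⊤ : ℕ∞) g) (hg₁ : ContDiff ℝ (⊤ : ℕ∞) g₁) (hg₂ : ContDiff ℝ (⊤ : ℕ∞) g₂)
    (F : ℝ → ℝ → ℝ → ℝ → ℝ)
    (hF : ContDiff ℝ (⊤ : ℕ∞) (fun p : ℝ × ℝ × ℝ × ℝ => F p.1 p.2.1 p.2.2.1 p.2.2.2)) :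
    (∀ x y t u, Xop f₁ (Xop f₂ F) x y t u - Xop f₂ (Xop f₁ F) x y t u = 0)
    ∧ (∀ x y t u, Xop f (Yop σ g F) x y t u - Yop σ g (Xop f F) x y t u = 0)
    ∧ (∀ x y t u, Yop σ g₁ (Yop σ g₂ F) x y t u - Yop σ g₂ (Yop σ g₁ F) x y t u
        = Xop (fun s => (deriv g₁ s * g₂ s - g₁ s * deriv g₂ s) / (2 * σ s)) F x y t u) := by
  set Fu : E4 → ℝ := fun p => F p.1 p.2.1 p.2.2.1 p.2.2.2 with hFudef
  have hFu : ContDiff ℝ (⊤ : ℕ∞) Fu := hF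
  have hFd : Differentiable ℝ Fu := hFu.differentiable (by simp)
  set G1 : E4 → ℝ := dd Fu ex with hG1def
  set G2 : E4 → ℝ := dd Fu ey with hG2def
  set G4 : E4 → ℝ := dd Fu eu with hG4def
  have hG1 : ContDiff ℝ (⊤ : ℕ∞) G1 := contDiff_dd hFu ex
  have hG2 : ContDiff ℝ (⊤ : ℕ∞) G2 := contDiff_dd hFu ey
  have hG4 : ContDiff ℝ (⊤ : ℕ∞) G4 := contDiff_dd hFu eu
  have hG1d := hG1.differentiable (by simp)
  have hG2d := hG2.differentiable (by simp)
  have hG4d := hG4.differentiable (by simp)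
  -- first partials
  have DxF : ∀ x y t u : ℝ, Dx F x y t u = G1 (x,y,t,u) := fun x y t u =>
    (hasDerivAt_sx hFd x y t u).deriv
  have DyF : ∀ x y t u : ℝ, Dy F x y t u = G2 (x,y,t,u) := fun x y t u =>
    (hasDerivAt_sy hFd x y t u).deriv
  have DuF : ∀ x y t u : ℝ, Du F x y t u = G4 (x,y,t,u) := fun x y t u =>
    (hasDerivAt_su hFd x y t u).deriv
  -- symmetry of second partials
  have Hcomm : ∀ v w : E4, ∀ p : E4, dd (dd Fu v) w p = dd (dd Fu w) v p :=
    fun v w p => dd_comm hFu v w p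
  refine ⟨?_, ?_, ?_⟩
  · -- [X f₁, X f₂] = 0
    intro x y t u
    have ex2 : ∀ (k : ℝ → ℝ), (fun x' => Xop k F x' y t u)
        = fun x' => k t * G1 (x',y,t,u) + deriv k t * G4 (x',y,t,u) + 0 * G4 (x',y,t,u) := by
      intro k; funext x'; simp [Xop, DxF, DuF]
    have eu2 : ∀ (k : ℝ → ℝ), (fun u' => Xop k F x y t u')
        = fun u' => k t * G1 (x,y,t,u') + deriv k t * G4 (x,y,t,u') + 0 * G4 (x,y,t,u') := by
      intro k; funext u'; simp [Xop, DxF, DuF]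
    have hXx : ∀ (k : ℝ → ℝ), Dx (Xop k F) x y t u
        = k t * dd G1 ex (x,y,t,u) + deriv k t * dd G4 ex (x,y,t,u) := by
      intro k
      show deriv (fun x' => Xop k F x' y t u) x = _
      rw [ex2 k, derivX_comb3 hG1d hG4d hG4d]; ring
    have hXu : ∀ (k : ℝ → ℝ), Du (Xop k F) x y t u
        = k t * dd G1 eu (x,y,t,u) + deriv k t * dd G4 eu (x,y,t,u) := by
      intro k
      show deriv (fun u' => Xop k F x y t u') u = _
      rw [eu2 k, derivU_comb3 hG1d hG4d hG4d]; ring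
    show Xop f₁ (Xop f₂ F) x y t u - Xop f₂ (Xop f₁ F) x y t u = 0
    simp only [Xop, hXx, hXu]
    rw [Hcomm eu ex (x,y,t,u)]
    show _ - _ = (0:ℝ)
    simp only [← hG1def, ← hG4def]
    ring
  · -- [X f, Y g] = 0
    intro x y t u
    set a : ℝ := deriv g t / (2 * σ t)
    set b : ℝ := deriv (fun s => deriv g s / (2 * σ s)) t
    -- partials of Yop g F in x and u
    have eYx : (fun x' => Yop σ g F x' y t u)
        = fun x' => g t * G2 (x',y,t,u) + (-(a * y)) * G1 (x',y,t,u)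
            + (-(b * y)) * G4 (x',y,t,u) := by
      funext x'; simp [Yop, DxF, DyF, DuF]; ring
    have eYu : (fun u' => Yop σ g F x y t u')
        = fun u' => g t * G2 (x,y,t,u') + (-(a * y)) * G1 (x,y,t,u')
            + (-(b * y)) * G4 (x,y,t,u') := by
      funext u'; simp [Yop, DxF, DyF, DuF]; ring
    have hYx : Dx (Yop σ g F) x y t u
        = g t * dd G2 ex (x,y,t,u) - a * y * dd G1 ex (x,y,t,u)
          - b * y * dd G4 ex (x,y,t,u) := by
      show deriv (fun x' => Yop σ g F x' y t u) x = _
      rw [eYx, derivX_comb3 hG2d hG1d hG4d]; ring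
    have hYu : Du (Yop σ g F) x y t u
        = g t * dd G2 eu (x,y,t,u) - a * y * dd G1 eu (x,y,t,u)
          - b * y * dd G4 eu (x,y,t,u) := by
      show deriv (fun u' => Yop σ g F x y t u') u = _
      rw [eYu, derivU_comb3 hG2d hG1d hG4d]; ring
    -- partials of Xop f F in x, y, u
    have eX : ∀ x' y' u' : ℝ, Xop f F x' y' t u'
        = f t * G1 (x',y',t,u') + deriv f t * G4 (x',y',t,u') := by
      intro x' y' u'; simp [Xop, DxF, DuF]
    have hXy : Dy (Xop f F) x y t u
        = f t * dd G1 ey (x,y,t,u) + deriv f t * dd G4 ey (x,y,t,u) := by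
      show deriv (fun y' => Xop f F x y' t u) y = _
      have : (fun y' => Xop f F x y' t u)
          = fun y' => f t * G1 (x,y',t,u) + deriv f t * G4 (x,y',t,u) + 0 * G4 (x,y',t,u) := by
        funext y'; rw [eX]; ring
      rw [this, derivY_comb3 hG1d hG4d hG4d]; ring
    have hXx : Dx (Xop f F) x y t u
        = f t * dd G1 ex (x,y,t,u) + deriv f t * dd G4 ex (x,y,t,u) := by
      show deriv (fun x' => Xop f F x' y t u) x = _
      have : (fun x' => Xop f F x' y t u)
          = fun x' => f t * G1 (x',y,t,u) + deriv f t * G4 (x',y,t,u) + 0 * G4 (x',y,t,u) := by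
        funext x'; rw [eX]; ring
      rw [this, derivX_comb3 hG1d hG4d hG4d]; ring
    have hXu : Du (Xop f F) x y t u
        = f t * dd G1 eu (x,y,t,u) + deriv f t * dd G4 eu (x,y,t,u) := by
      show deriv (fun u' => Xop f F x y t u') u = _
      have : (fun u' => Xop f F x y t u')
          = fun u' => f t * G1 (x,y,t,u') + deriv f t * G4 (x,y,t,u') + 0 * G4 (x,y,t,u') := by
        funext u'; rw [eX]; ring
      rw [this, derivU_comb3 hG1d hG4d hG4d]; ring
    show f t * Dx (Yop σ g F) x y t u + deriv f t * Du (Yop σ g F) x y t u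
        - (g t * Dy (Xop f F) x y t u - a * y * Dx (Xop f F) x y t u
            - b * y * Du (Xop f F) x y t u) = 0
    rw [hYx, hYu, hXy, hXx, hXu]
    rw [hG1def, hG2def, hG4def]
    rw [Hcomm ey ex, Hcomm ey eu, Hcomm ex eu]
    ring
  · -- [Y g₁, Y g₂] = X h
    intro x y t u
    set a₁ : ℝ := deriv g₁ t / (2 * σ t) with ha₁
    set b₁ : ℝ := deriv (fun s => deriv g₁ s / (2 * σ s)) t with hb₁
    set a₂ : ℝ := deriv g₂ t / (2 * σ t) with ha₂
    set b₂ : ℝ := deriv (fun s => deriv g₂ s / (2 * σ s)) t with hb₂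
    -- partials of Yop g F
    have eYx : ∀ (k : ℝ → ℝ) (ak bk : ℝ), ak = deriv k t / (2 * σ t) →
        bk = deriv (fun s => deriv k s / (2 * σ s)) t →
        (fun x' => Yop σ k F x' y t u)
        = fun x' => k t * G2 (x',y,t,u) + (-(ak * y)) * G1 (x',y,t,u)
            + (-(bk * y)) * G4 (x',y,t,u) := by
      intro k ak bk hak hbk; funext x'
      simp [Yop, DxF, DyF, DuF, hak, hbk]; ring
    have eYu : ∀ (k : ℝ → ℝ) (ak bk : ℝ), ak = deriv k t / (2 * σ t) →
        bk = deriv (fun s => deriv k s / (2 * σ s)) t →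
        (fun u' => Yop σ k F x y t u')
        = fun u' => k t * G2 (x,y,t,u') + (-(ak * y)) * G1 (x,y,t,u')
            + (-(bk * y)) * G4 (x,y,t,u') := by
      intro k ak bk hak hbk; funext u'
      simp [Yop, DxF, DyF, DuF, hak, hbk]; ring
    have eYy : ∀ (k : ℝ → ℝ) (ak bk : ℝ), ak = deriv k t / (2 * σ t) →
        bk = deriv (fun s => deriv k s / (2 * σ s)) t →
        (fun y' => Yop σ k F x y' t u)
        = fun y' => k t * G2 (x,y',t,u) + ((-ak) * y') * G1 (x,y',t,u)
            + ((-bk) * y') * G4 (x,y',t,u) := by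
      intro k ak bk hak hbk; funext y'
      simp [Yop, DxF, DyF, DuF, hak, hbk]; ring
    have hYx : ∀ (k : ℝ → ℝ) (ak bk : ℝ), ak = deriv k t / (2 * σ t) →
        bk = deriv (fun s => deriv k s / (2 * σ s)) t →
        Dx (Yop σ k F) x y t u
        = k t * dd G2 ex (x,y,t,u) - ak * y * dd G1 ex (x,y,t,u)
          - bk * y * dd G4 ex (x,y,t,u) := by
      intro k ak bk hak hbk
      show deriv (fun x' => Yop σ k F x' y t u) x = _
      rw [eYx k ak bk hak hbk, derivX_comb3 hG2d hG1d hG4d]; ring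
    have hYu : ∀ (k : ℝ → ℝ) (ak bk : ℝ), ak = deriv k t / (2 * σ t) →
        bk = deriv (fun s => deriv k s / (2 * σ s)) t →
        Du (Yop σ k F) x y t u
        = k t * dd G2 eu (x,y,t,u) - ak * y * dd G1 eu (x,y,t,u)
          - bk * y * dd G4 eu (x,y,t,u) := by
      intro k ak bk hak hbk
      show deriv (fun u' => Yop σ k F x y t u') u = _
      rw [eYu k ak bk hak hbk, derivU_comb3 hG2d hG1d hG4d]; ring
    have hYy : ∀ (k : ℝ → ℝ) (ak bk : ℝ), ak = deriv k t / (2 * σ t) →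
        bk = deriv (fun s => deriv k s / (2 * σ s)) t →
        Dy (Yop σ k F) x y t u
        = k t * dd G2 ey (x,y,t,u)
          - (ak * G1 (x,y,t,u) + ak * y * dd G1 ey (x,y,t,u))
          - (bk * G4 (x,y,t,u) + bk * y * dd G4 ey (x,y,t,u)) := by
      intro k ak bk hak hbk
      show deriv (fun y' => Yop σ k F x y' t u) y = _
      rw [eYy k ak bk hak hbk, derivY_Ytype hG2d hG1d hG4d]; ring
    -- the bracket coefficient h and its derivative
    set h : ℝ → ℝ := fun s => (deriv g₁ s * g₂ s - g₁ s * deriv g₂ s) / (2 * σ s) with hh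
    have hval : h t = g₂ t * a₁ - g₁ t * a₂ := by
      rw [hh, ha₁, ha₂]; ring
    have hσ2 : ∀ s : ℝ, (2 : ℝ) * σ s ≠ 0 := fun s => mul_ne_zero two_ne_zero (hσ0 s)
    have hα : ∀ (k : ℝ → ℝ), ContDiff ℝ (⊤ : ℕ∞) k →
        ContDiff ℝ (⊤ : ℕ∞) (fun s => deriv k s / (2 * σ s)) := fun k hk =>
      (deriv_contDiff hk).div (contDiff_const.mul hσ) hσ2
    have hα₁ := hα g₁ hg₁
    have hα₂ := hα g₂ hg₂
    have hrw : h = fun s => g₂ s * (deriv g₁ s / (2 * σ s))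
        - g₁ s * (deriv g₂ s / (2 * σ s)) := by
      funext s; rw [hh]; ring
    have hderiv : deriv h t = g₂ t * b₁ - g₁ t * b₂ := by
      have h1 : HasDerivAt (fun s => g₂ s * (deriv g₁ s / (2 * σ s)))
          (deriv g₂ t * (deriv g₁ t / (2 * σ t)) + g₂ t * b₁) t :=
        ((hg₂.differentiable (by simp) t).hasDerivAt).mul
          ((hα₁.differentiable (by simp) t).hasDerivAt)
      have h2 : HasDerivAt (fun s => g₁ s * (deriv g₂ s / (2 * σ s)))
          (deriv g₁ t * (deriv g₂ t / (2 * σ t)) + g₁ t * b₂) t :=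
        ((hg₁.differentiable (by simp) t).hasDerivAt).mul
          ((hα₂.differentiable (by simp) t).hasDerivAt)
      have : deriv (fun s => g₂ s * (deriv g₁ s / (2 * σ s)) - g₁ s * (deriv g₂ s / (2 * σ s))) t
          = deriv g₂ t * (deriv g₁ t / (2 * σ t)) + g₂ t * b₁
            - (deriv g₁ t * (deriv g₂ t / (2 * σ t)) + g₁ t * b₂) := (h1.sub h2).deriv
      rw [hrw, this]; ring
    show Yop σ g₁ (Yop σ g₂ F) x y t u - Yop σ g₂ (Yop σ g₁ F) x y t u
        = h t * Dx F x y t u + deriv h t * Du F x y t u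
    have L1 : Yop σ g₁ (Yop σ g₂ F) x y t u
        = g₁ t * Dy (Yop σ g₂ F) x y t u - a₁ * y * Dx (Yop σ g₂ F) x y t u
          - b₁ * y * Du (Yop σ g₂ F) x y t u := by
      simp [Yop, ha₁, hb₁]
    have L2 : Yop σ g₂ (Yop σ g₁ F) x y t u
        = g₂ t * Dy (Yop σ g₁ F) x y t u - a₂ * y * Dx (Yop σ g₁ F) x y t u
          - b₂ * y * Du (Yop σ g₁ F) x y t u := by
      simp [Yop, ha₂, hb₂]
    rw [L1, L2, hYy g₂ a₂ b₂ ha₂ hb₂, hYx g₂ a₂ b₂ ha₂ hb₂, hYu g₂ a₂ b₂ ha₂ hb₂,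
      hYy g₁ a₁ b₁ ha₁ hb₁, hYx g₁ a₁ b₁ ha₁ hb₁, hYu g₁ a₁ b₁ ha₁ hb₁,
      DxF, DuF, hval, hderiv]
    rw [hG1def, hG2def, hG4def]
    rw [Hcomm ex ey, Hcomm eu ey, Hcomm ex eu]
    ring
end

section
/- Every C² solution Ω on an interval of Ω'' - (σ'/σ)Ω' - (2/3)(Ω')² = 0 with the additional assumption that c₁∫σ dt + c₂ > 0 satisfies e^{Ω(t)} = [c₁∫σ(t)dt + c₂]^{-3/2} for suitable constants c₁, c₂; conversely, for any constants c₁, c₂ such that S(t) = c₁∫σ dt + c₂ > 0 on the interval, the function Ω(t) = -(3/2)·log S(t) solves Ω'' - (σ'/σ)Ω' - (2/3)(Ω')² = 0. -/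
/-!
The substitution `W = exp (-(2/3) Ω)` linearises the equation: `W' = -(2/3) Ω' W` and
`W'' = -(2/3) (Ω'' - (2/3) Ω'²) W`, so the equation reads `W'' = (σ'/σ) W'`, i.e. `(W'/σ)' = 0`.
Hence `W' = c₁ σ` and `W = c₁ ∫σ + c₂`, which is positive because `W` is an exponential.
-/

open Set Real

section

variable {s : Set ℝ} {f σ σ' : ℝ → ℝ}

theorem IsOpen.exists_eq_const_of_hasDerivAt_zero (hs : IsOpen s) (hs' : IsPreconnected s)
    (hf : ∀ t ∈ s, HasDerivAt f 0 t) : ∃ a, ∀ t ∈ s, f t = a :=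
  hs.exists_is_const_of_deriv_eq_zero hs'
    (fun t ht => (hf t ht).differentiableAt.differentiableWithinAt) (fun t ht => (hf t ht).deriv)

theorem IsOpen.exists_eq_const_mul_of_hasDerivAt_eq_div_mul (hs : IsOpen s)
    (hs' : IsPreconnected s) (hσ : ∀ t ∈ s, HasDerivAt σ (σ' t) t) (hσ0 : ∀ t ∈ s, σ t ≠ 0)
    (hf : ∀ t ∈ s, HasDerivAt f (σ' t / σ t * f t) t) : ∃ c, ∀ t ∈ s, f t = c * σ t := by
  obtain ⟨c, hc⟩ := hs.exists_eq_const_of_hasDerivAt_zero hs' (f := fun t => f t / σ t)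
    fun t ht => by
      refine ((hf t ht).fun_div (hσ t ht) (hσ0 t ht)).congr_deriv ?_
      field_simp [hσ0 t ht]
      ring
  exact ⟨c, fun t ht => by rw [← hc t ht, div_mul_cancel₀ _ (hσ0 t ht)]⟩

theorem IsOpen.exists_eq_const_mul_add_of_hasDerivAt {F : ℝ → ℝ} (hs : IsOpen s)
    (hs' : IsPreconnected s) (hF : ∀ t ∈ s, HasDerivAt F (σ t) t) {c : ℝ}
    (hf : ∀ t ∈ s, HasDerivAt f (c * σ t) t) : ∃ d, ∀ t ∈ s, f t = c * F t + d := by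
  obtain ⟨d, hd⟩ := hs.exists_eq_const_of_hasDerivAt_zero hs' (f := fun t => f t - c * F t)
    fun t ht => by simpa using (hf t ht).fun_sub ((hF t ht).const_mul c)
  exact ⟨d, fun t ht => by rw [← hd t ht]; ring⟩

theorem deriv_deriv_eq_of_hasDerivAt {f' : ℝ → ℝ} {t f'' : ℝ} (hs : IsOpen s)
    (hf : ∀ u ∈ s, HasDerivAt f (f' u) u) (ht : t ∈ s) (hf' : HasDerivAt f' f'' t) :
    deriv (deriv f) t = f'' := by
  have hderiv : deriv f =ᶠ[nhds t] f' :=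
    Filter.eventuallyEq_of_mem (hs.mem_nhds ht) fun u hu => (hf u hu).deriv
  rw [hderiv.deriv_eq, hf'.deriv]

theorem ContDiffOn.hasDerivAt_deriv {n : WithTop ℕ∞} {t : ℝ} (hf : ContDiffOn ℝ n f s)
    (hn : n ≠ 0) (hs : IsOpen s) (ht : t ∈ s) : HasDerivAt f (deriv f t) t :=
  ((hf.differentiableOn hn t ht).differentiableAt (hs.mem_nhds ht)).hasDerivAt

end

theorem hasDerivAt_deriv_exp_neg_two_thirds_mul {Ω Ω' : ℝ → ℝ} {Ω'' t : ℝ}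
    (hΩ : HasDerivAt Ω (Ω' t) t) (hΩ' : HasDerivAt Ω' Ω'' t) :
    HasDerivAt (fun u => -(2 / 3) * Ω' u * exp (-(2 / 3) * Ω u))
      (-(2 / 3) * (Ω'' - 2 / 3 * Ω' t ^ 2) * exp (-(2 / 3) * Ω t)) t := by
  refine ((hΩ'.const_mul (-(2 / 3))).mul (hΩ.const_mul (-(2 / 3))).exp).congr_deriv ?_
  ring

theorem exists_exp_eq_rpow_of_ode {s : Set ℝ} (hs : IsOpen s) (hs' : IsPreconnected s)
    {σ σ' F Ω Ω' Ω'' : ℝ → ℝ} (hσ : ∀ t ∈ s, HasDerivAt σ (σ' t) t) (hσ0 : ∀ t ∈ s, σ t ≠ 0)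
    (hF : ∀ t ∈ s, HasDerivAt F (σ t) t) (hΩ : ∀ t ∈ s, HasDerivAt Ω (Ω' t) t)
    (hΩ' : ∀ t ∈ s, HasDerivAt Ω' (Ω'' t) t)
    (hode : ∀ t ∈ s, Ω'' t - σ' t / σ t * Ω' t - 2 / 3 * Ω' t ^ 2 = 0) :
    ∃ c₁ c₂ : ℝ, (∀ t ∈ s, 0 < c₁ * F t + c₂) ∧
      ∀ t ∈ s, exp (Ω t) = (c₁ * F t + c₂) ^ (-(3 : ℝ) / 2) := by
  set W := fun u => exp (-(2 / 3) * Ω u)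
  set W' := fun u => -(2 / 3) * Ω' u * W u
  have hW : ∀ t ∈ s, HasDerivAt W (W' t) t := fun t ht => by
    refine ((hΩ t ht).const_mul (-(2 / 3))).exp.congr_deriv ?_
    ring
  have hW' : ∀ t ∈ s, HasDerivAt W' (σ' t / σ t * W' t) t := fun t ht => by
    refine (hasDerivAt_deriv_exp_neg_two_thirds_mul (hΩ t ht) (hΩ' t ht)).congr_deriv ?_
    linear_combination (-(2 / 3) * W t) * hode t ht
  obtain ⟨c₁, hc₁⟩ := hs.exists_eq_const_mul_of_hasDerivAt_eq_div_mul hs' hσ hσ0 hW'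
  obtain ⟨c₂, hc₂⟩ := hs.exists_eq_const_mul_add_of_hasDerivAt hs' hF
    fun t ht => hc₁ t ht ▸ hW t ht
  refine ⟨c₁, c₂, fun t ht => hc₂ t ht ▸ exp_pos _, fun t ht => ?_⟩
  rw [← hc₂ t ht, ← exp_mul]
  ring_nf

theorem neg_three_halves_mul_log_solves_ode {s : Set ℝ} (hs : IsOpen s) {σ S : ℝ → ℝ} {c t : ℝ}
    (ht : t ∈ s) (hσ : DifferentiableAt ℝ σ t) (hσ0 : σ t ≠ 0)
    (hS : ∀ u ∈ s, HasDerivAt S (c * σ u) u) (hS0 : ∀ u ∈ s, 0 < S u) :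
    deriv (deriv fun u => -(3 / 2) * log (S u)) t
      - (deriv σ t / σ t) * deriv (fun u => -(3 / 2) * log (S u)) t
      - (2 / 3) * (deriv (fun u => -(3 / 2) * log (S u)) t) ^ 2 = 0 := by
  have hΩ : ∀ u ∈ s, HasDerivAt (fun u => -(3 / 2) * log (S u)) (-(3 / 2) * (c * σ u / S u)) u :=
    fun u hu => ((hS u hu).log (hS0 u hu).ne').const_mul _
  rw [deriv_deriv_eq_of_hasDerivAt hs hΩ ht
    (((hσ.hasDerivAt.const_mul c).div (hS t ht) (hS0 t ht).ne').const_mul _), (hΩ t ht).deriv]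
  field_simp [(hS0 t ht).ne']
  ring

theorem omega_ode_solutions_general (lo hi : ℝ)
    (σ F : ℝ → ℝ)
    (hσ : ContDiffOn ℝ 1 σ (Set.Ioo lo hi))
    (hσ0 : ∀ t ∈ Set.Ioo lo hi, σ t ≠ 0)
    (hF : ∀ t ∈ Set.Ioo lo hi, HasDerivAt F (σ t) t) :
    (∀ Ω : ℝ → ℝ, ContDiffOn ℝ 2 Ω (Set.Ioo lo hi) →
      (∀ t ∈ Set.Ioo lo hi,
        deriv (deriv Ω) t - (deriv σ t / σ t) * deriv Ω t
          - (2 / 3) * (deriv Ω t) ^ 2 = 0) →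
      ∃ c₁ c₂ : ℝ, (∀ t ∈ Set.Ioo lo hi, 0 < c₁ * F t + c₂) ∧
        ∀ t ∈ Set.Ioo lo hi,
          Real.exp (Ω t) = (c₁ * F t + c₂) ^ (-(3 : ℝ) / 2))
    ∧ (∀ c₁ c₂ : ℝ, (∀ t ∈ Set.Ioo lo hi, 0 < c₁ * F t + c₂) →
      ∀ t ∈ Set.Ioo lo hi,
        deriv (deriv (fun s => -(3 / 2) * Real.log (c₁ * F s + c₂))) t
          - (deriv σ t / σ t)
            * deriv (fun s => -(3 / 2) * Real.log (c₁ * F s + c₂)) t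
          - (2 / 3)
            * (deriv (fun s => -(3 / 2) * Real.log (c₁ * F s + c₂)) t) ^ 2 = 0) := by
  have hσ' : ∀ t ∈ Ioo lo hi, HasDerivAt σ (deriv σ t) t :=
    fun t ht => hσ.hasDerivAt_deriv one_ne_zero isOpen_Ioo ht
  refine ⟨fun Ω hΩ hode => ?_, fun c₁ c₂ hS t ht => ?_⟩
  · have hΩ' : ContDiffOn ℝ 1 (deriv Ω) (Ioo lo hi) := hΩ.deriv_of_isOpen isOpen_Ioo le_rfl
    exact exists_exp_eq_rpow_of_ode isOpen_Ioo isPreconnected_Ioo hσ' hσ0 hF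
      (fun t ht => hΩ.hasDerivAt_deriv two_ne_zero isOpen_Ioo ht)
      (fun t ht => hΩ'.hasDerivAt_deriv one_ne_zero isOpen_Ioo ht) hode
  · exact neg_three_halves_mul_log_solves_ode isOpen_Ioo ht (hσ' t ht).differentiableAt
      (hσ0 t ht) (fun u hu => by simpa using ((hF u hu).const_mul c₁).add_const c₂) hS

/-- Solutions of `Ω'' - (σ'/σ) Ω' - (2/3)(Ω')² = 0`: every `C²` solution satisfies
`e^{Ω} = (c₁ ∫σ + c₂)^{-3/2}` for suitable constants `c₁, c₂` (with `c₁ ∫σ + c₂ > 0`),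
and conversely `Ω = -(3/2) log(c₁ ∫σ + c₂)` solves the ODE whenever `c₁ ∫σ + c₂ > 0`. -/
theorem omega_ode_solutions (lo hi : ℝ) (hlo : lo < hi)
    (σ F : ℝ → ℝ)
    (hσ : ContDiffOn ℝ 1 σ (Set.Ioo lo hi))
    (hσ0 : ∀ t ∈ Set.Ioo lo hi, σ t ≠ 0)
    (hF : ∀ t ∈ Set.Ioo lo hi, HasDerivAt F (σ t) t) :
    (∀ Ω : ℝ → ℝ, ContDiffOn ℝ 2 Ω (Set.Ioo lo hi) →
      (∀ t ∈ Set.Ioo lo hi,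
        deriv (deriv Ω) t - (deriv σ t / σ t) * deriv Ω t
          - (2 / 3) * (deriv Ω t) ^ 2 = 0) →
      ∃ c₁ c₂ : ℝ, (∀ t ∈ Set.Ioo lo hi, 0 < c₁ * F t + c₂) ∧
        ∀ t ∈ Set.Ioo lo hi,
          Real.exp (Ω t) = (c₁ * F t + c₂) ^ (-(3 : ℝ) / 2))
    ∧ (∀ c₁ c₂ : ℝ, (∀ t ∈ Set.Ioo lo hi, 0 < c₁ * F t + c₂) →
      ∀ t ∈ Set.Ioo lo hi,
        deriv (deriv (fun s => -(3 / 2) * Real.log (c₁ * F s + c₂))) t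
          - (deriv σ t / σ t)
            * deriv (fun s => -(3 / 2) * Real.log (c₁ * F s + c₂)) t
          - (2 / 3)
            * (deriv (fun s => -(3 / 2) * Real.log (c₁ * F s + c₂)) t) ^ 2 = 0) :=
  omega_ode_solutions_general lo hi σ F hσ hσ0 hF
end

section
/- If p(t) = [c₁∫σ(t)dt + c₂]^{-3/2}·σ(t) with S(t) = c₁∫σ dt + c₂ > 0 and σ nowhere vanishing and C¹, then p and σ satisfy the compatibility condition 2(p'/p)² - 3(d/dt)(p'/p) - (p'/p)(σ'/σ) + 3(d/dt)(σ'/σ) - (σ'/σ)² = 0. -/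
/-- If `p(t) = (c₁ ∫σ + c₂)^{-3/2} σ(t)` with `c₁ ∫σ + c₂ > 0` and `σ` nowhere vanishing,
then `p` and `σ` satisfy the compatibility condition
`2(p'/p)² - 3(p'/p)' - (p'/p)(σ'/σ) + 3(σ'/σ)' - (σ'/σ)² = 0`. -/
theorem special_p_satisfies_compatibility (lo hi : ℝ) (hlo : lo < hi)
    (σ F p : ℝ → ℝ) (c₁ c₂ : ℝ)
    (hσ : ContDiffOn ℝ 2 σ (Set.Ioo lo hi))
    (hσ0 : ∀ t ∈ Set.Ioo lo hi, σ t ≠ 0)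
    (hF : ∀ t ∈ Set.Ioo lo hi, HasDerivAt F (σ t) t)
    (hS : ∀ t ∈ Set.Ioo lo hi, 0 < c₁ * F t + c₂)
    (hp : ∀ t ∈ Set.Ioo lo hi, p t = (c₁ * F t + c₂) ^ (-(3 : ℝ) / 2) * σ t) :
    ∀ t ∈ Set.Ioo lo hi,
      2 * (deriv p t / p t) ^ 2 - 3 * deriv (fun s => deriv p s / p s) t
        - (deriv p t / p t) * (deriv σ t / σ t)
        + 3 * deriv (fun s => deriv σ s / σ s) t
        - (deriv σ t / σ t) ^ 2 = 0 := by
  have hopen : IsOpen (Set.Ioo lo hi) := isOpen_Ioo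
  have hσdiff : ∀ s ∈ Set.Ioo lo hi, HasDerivAt σ (deriv σ s) s := by
    intro s hs
    exact ((hσ.differentiableOn (by norm_num)).differentiableAt
      (hopen.mem_nhds hs)).hasDerivAt
  have hσ'cd : ContDiffOn ℝ 1 (deriv σ) (Set.Ioo lo hi) :=
    hσ.deriv_of_isOpen hopen (by norm_num)
  have hσ'diff : ∀ s ∈ Set.Ioo lo hi, HasDerivAt (deriv σ) (deriv (deriv σ) s) s := by
    intro s hs
    exact ((hσ'cd.differentiableOn (by norm_num)).differentiableAt
      (hopen.mem_nhds hs)).hasDerivAt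
  have hSd : ∀ s ∈ Set.Ioo lo hi, HasDerivAt (fun r => c₁ * F r + c₂) (c₁ * σ s) s := by
    intro s hs
    simpa using ((hF s hs).const_mul c₁).add_const c₂
  -- derivative of p on the interval
  have hpd : ∀ s ∈ Set.Ioo lo hi, HasDerivAt p
      ((c₁ * σ s) * (-(3 : ℝ) / 2) * (c₁ * F s + c₂) ^ (-(3 : ℝ) / 2 - 1) * σ s
        + (c₁ * F s + c₂) ^ (-(3 : ℝ) / 2) * deriv σ s) s := by
    intro s hs
    have h1 : HasDerivAt (fun r => (c₁ * F r + c₂) ^ (-(3 : ℝ) / 2) * σ r)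
        ((c₁ * σ s) * (-(3 : ℝ) / 2) * (c₁ * F s + c₂) ^ (-(3 : ℝ) / 2 - 1) * σ s
          + (c₁ * F s + c₂) ^ (-(3 : ℝ) / 2) * deriv σ s) s :=
      ((hSd s hs).rpow_const (Or.inl (ne_of_gt (hS s hs)))).mul (hσdiff s hs)
    refine h1.congr_of_eventuallyEq ?_
    filter_upwards [hopen.mem_nhds hs] with r hr using hp r hr
  -- p'/p formula on the interval
  have hq : ∀ s ∈ Set.Ioo lo hi, deriv p s / p s
      = deriv σ s / σ s - 3 * c₁ / 2 * (σ s / (c₁ * F s + c₂)) := by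
    intro s hs
    have hσs : σ s ≠ 0 := hσ0 s hs
    have hA : (0 : ℝ) < c₁ * F s + c₂ := hS s hs
    have hA0 : (c₁ * F s + c₂) ≠ 0 := ne_of_gt hA
    have hrp : (c₁ * F s + c₂) ^ (-(3 : ℝ) / 2) ≠ 0 :=
      ne_of_gt (Real.rpow_pos_of_pos hA _)
    have hsplit : (c₁ * F s + c₂) ^ (-(3 : ℝ) / 2 - 1)
        = (c₁ * F s + c₂) ^ (-(3 : ℝ) / 2) * (c₁ * F s + c₂)⁻¹ := by
      rw [show (-(3 : ℝ) / 2 - 1) = (-(3 : ℝ) / 2 + (-1)) by ring,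
        Real.rpow_add hA, Real.rpow_neg_one]
    have h2 : c₁ * σ s * (-(3 : ℝ) / 2)
          * ((c₁ * F s + c₂) ^ (-(3 : ℝ) / 2) * (c₁ * F s + c₂)⁻¹) * σ s
          + (c₁ * F s + c₂) ^ (-(3 : ℝ) / 2) * deriv σ s
        = (c₁ * F s + c₂) ^ (-(3 : ℝ) / 2)
          * ((-(3 : ℝ) / 2) * c₁ * σ s ^ 2 * (c₁ * F s + c₂)⁻¹ + deriv σ s) := by ring
    rw [(hpd s hs).deriv, hp s hs, hsplit, h2, mul_div_mul_left _ _ hrp]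
    field_simp
    ring
  intro t ht
  have hA : (0 : ℝ) < c₁ * F t + c₂ := hS t ht
  have hA0 : (c₁ * F t + c₂) ≠ 0 := ne_of_gt hA
  have hσt : σ t ≠ 0 := hσ0 t ht
  -- derivative of σ'/σ
  have hud : HasDerivAt (fun s => deriv σ s / σ s)
      ((deriv (deriv σ) t * σ t - deriv σ t * deriv σ t) / (σ t) ^ 2) t :=
    (hσ'diff t ht).div (hσdiff t ht) hσt
  -- derivative of σ/S
  have had : HasDerivAt (fun s => σ s / (c₁ * F s + c₂))
      ((deriv σ t * (c₁ * F t + c₂) - σ t * (c₁ * σ t)) / (c₁ * F t + c₂) ^ 2) t :=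
    (hσdiff t ht).div (hSd t ht) hA0
  have hgd : HasDerivAt (fun s => deriv σ s / σ s - 3 * c₁ / 2 * (σ s / (c₁ * F s + c₂)))
      ((deriv (deriv σ) t * σ t - deriv σ t * deriv σ t) / (σ t) ^ 2
        - 3 * c₁ / 2 * ((deriv σ t * (c₁ * F t + c₂) - σ t * (c₁ * σ t))
            / (c₁ * F t + c₂) ^ 2)) t :=
    hud.sub (had.const_mul _)
  have hqd : deriv (fun s => deriv p s / p s) t
      = (deriv (deriv σ) t * σ t - deriv σ t * deriv σ t) / (σ t) ^ 2
        - 3 * c₁ / 2 * ((deriv σ t * (c₁ * F t + c₂) - σ t * (c₁ * σ t))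
            / (c₁ * F t + c₂) ^ 2) := by
    have heq : (fun s => deriv p s / p s)
        =ᶠ[nhds t] (fun s => deriv σ s / σ s - 3 * c₁ / 2 * (σ s / (c₁ * F s + c₂))) := by
      filter_upwards [hopen.mem_nhds ht] with r hr using hq r hr
    rw [heq.deriv_eq, hgd.deriv]
  rw [hqd, hud.deriv, hq t ht]
  field_simp
  ring
end

section
/- The transformation t̃ = T(t) = ∫Σ^{-1/2}dt, z̃ = z, F = Σ^{-1/2}·F̃(z̃, t̃), where Σ' = σ and Σ > 0, maps solutions of the generalized Burgers equation F_t + FF_z + F_zz + (Σ'/(2Σ))F = 0 to solutions of F̃_t̃ + F̃F̃_z̃ + Σ^{1/2}F̃_z̃z̃ = 0 (with Σ expressed as a function of t̃). -/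
/-!
Only the time derivative needs care. Writing `S = √Σ`, the relation `F̃(z, T t) = S(t) F(z, t)`
differentiated in `t` gives `F̃_t̃ · S⁻¹ = S' F + S F_t` with `S' = σ / (2S)`, while the
`z`-derivatives simply pick up the factor `S`. Substituting, the transformed equation equals
`Σ` times the original one.
-/

open Filter Topology

lemma differentiableAt_of_contDiff_uncurry {G : ℝ → ℝ → ℝ} {n : WithTop ℕ∞}
    (hG : ContDiff ℝ n (fun p : ℝ × ℝ => G p.1 p.2)) (hn : n ≠ 0) (z s : ℝ) :
    DifferentiableAt ℝ (G z) s :=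
  (hG.differentiable hn).differentiableAt.comp s
    (by fun_prop : DifferentiableAt ℝ (fun s => (z, s)) s)

/-- No differentiability of `f` is needed: near `t` it equals `(g ∘ T) / s`. -/
lemma deriv_eq_of_comp_eventuallyEq_mul {g T s f : ℝ → ℝ} {t s' : ℝ}
    (hg : DifferentiableAt ℝ g (T t)) (hT : HasDerivAt T (s t)⁻¹ t) (hs : HasDerivAt s s' t)
    (hst : s t ≠ 0) (hgf : (fun τ => g (T τ)) =ᶠ[𝓝 t] fun τ => s τ * f τ) :
    deriv g (T t) = s t * (s' * f t + s t * deriv f t) := by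
  have hgT : HasDerivAt (fun τ => g (T τ)) (deriv g (T t) * (s t)⁻¹) t :=
    hg.hasDerivAt.comp t hT
  have hf_eq : f =ᶠ[𝓝 t] fun τ => g (T τ) / s τ := by
    filter_upwards [hgf, hs.continuousAt.eventually_ne hst] with τ hτ hsτ
    rw [hτ, mul_div_cancel_left₀ _ hsτ]
  have hf : HasDerivAt f
      ((deriv g (T t) * (s t)⁻¹ * s t - g (T t) * s') / s t ^ 2) t :=
    (hgT.div hs hst).congr_of_eventuallyEq hf_eq
  rw [hf.deriv, hgf.eq_of_nhds]
  field_simp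
  ring

theorem burgers_transformation_general (lo hi : ℝ)
    (σ Sig T : ℝ → ℝ)
    (hSig : ∀ t ∈ Set.Ioo lo hi, HasDerivAt Sig (σ t) t)
    (hSigpos : ∀ t ∈ Set.Ioo lo hi, 0 < Sig t)
    (hT : ∀ t ∈ Set.Ioo lo hi, HasDerivAt T ((Real.sqrt (Sig t))⁻¹) t)
    (F : ℝ → ℝ → ℝ)
    (hsol : ∀ z : ℝ, ∀ t ∈ Set.Ioo lo hi,
      deriv (fun t' => F z t') t + F z t * deriv (fun z' => F z' t) z
        + deriv (deriv (fun z' => F z' t)) z + (σ t / (2 * Sig t)) * F z t = 0)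
    (G : ℝ → ℝ → ℝ) (g' : ℝ → ℝ)
    (hGC : ContDiff ℝ 2 (fun p : ℝ × ℝ => G p.1 p.2))
    (hG : ∀ z : ℝ, ∀ t ∈ Set.Ioo lo hi, G z (T t) = Real.sqrt (Sig t) * F z t)
    (hg' : ∀ t ∈ Set.Ioo lo hi, g' (T t) = Real.sqrt (Sig t)) :
    ∀ z : ℝ, ∀ t ∈ Set.Ioo lo hi,
      deriv (fun s => G z s) (T t)
        + G z (T t) * deriv (fun z' => G z' (T t)) z
        + g' (T t) * deriv (deriv (fun z' => G z' (T t))) z = 0 := by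
  intro z t ht
  set S := Real.sqrt (Sig t)
  have hS : 0 < S := Real.sqrt_pos.mpr (hSigpos t ht)
  have hS_sq : S ^ 2 = Sig t := Real.sq_sqrt (hSigpos t ht).le
  have hG_space : (fun z' => G z' (T t)) = fun z' => S * F z' t := funext fun z' => hG z' t ht
  have hG_time : deriv (G z) (T t)
      = S * (σ t / (2 * S) * F z t + S * deriv (fun t' => F z t') t) :=
    deriv_eq_of_comp_eventuallyEq_mul (differentiableAt_of_contDiff_uncurry hGC (by norm_num) z _)
      (hT t ht) ((hSig t ht).sqrt (hSigpos t ht).ne') hS.ne'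
      (eventually_of_mem (Ioo_mem_nhds ht.1 ht.2) fun τ hτ => hG z τ hτ)
  rw [hG_time, hG_space, deriv_const_mul_field', deriv_const_mul_field', hG z t ht, hg' t ht]
  have hE := hsol z t ht
  rw [← hS_sq] at hE
  field_simp at hE ⊢
  linear_combination hE

/-- The transformation `t̃ = T(t)` with `T' = Σ^{-1/2}`, `z̃ = z`, `F = Σ^{-1/2} F̃`
maps solutions of the generalized Burgers equation
`F_t + F F_z + F_zz + (Σ'/(2Σ)) F = 0` to solutions of
`F̃_t̃ + F̃ F̃_z̃ + g̃(t̃) F̃_z̃z̃ = 0` with `g̃(T(t)) = Σ(t)^{1/2}`. -/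
theorem burgers_transformation (lo hi : ℝ) (hlo : lo < hi)
    (σ Sig T : ℝ → ℝ)
    (hσ : ContinuousOn σ (Set.Ioo lo hi))
    (hSig : ∀ t ∈ Set.Ioo lo hi, HasDerivAt Sig (σ t) t)
    (hSigpos : ∀ t ∈ Set.Ioo lo hi, 0 < Sig t)
    (hT : ∀ t ∈ Set.Ioo lo hi, HasDerivAt T ((Real.sqrt (Sig t))⁻¹) t)
    (F : ℝ → ℝ → ℝ)
    (hF : ContDiff ℝ 2 (fun p : ℝ × ℝ => F p.1 p.2))
    (hsol : ∀ z : ℝ, ∀ t ∈ Set.Ioo lo hi,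
      deriv (fun t' => F z t') t + F z t * deriv (fun z' => F z' t) z
        + deriv (deriv (fun z' => F z' t)) z + (σ t / (2 * Sig t)) * F z t = 0)
    (G : ℝ → ℝ → ℝ) (g' : ℝ → ℝ)
    (hGC : ContDiff ℝ 2 (fun p : ℝ × ℝ => G p.1 p.2))
    (hG : ∀ z : ℝ, ∀ t ∈ Set.Ioo lo hi, G z (T t) = Real.sqrt (Sig t) * F z t)
    (hg' : ∀ t ∈ Set.Ioo lo hi, g' (T t) = Real.sqrt (Sig t)) :
    ∀ z : ℝ, ∀ t ∈ Set.Ioo lo hi,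
      deriv (fun s => G z s) (T t)
        + G z (T t) * deriv (fun z' => G z' (T t)) z
        + g' (T t) * deriv (deriv (fun z' => G z' (T t))) z = 0 :=
  burgers_transformation_general lo hi σ Sig T hSig hSigpos hT F hsol G g' hGC hG hg'
end
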